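/- Assume that the emission event g(t) and its image under the holonomy are spacelike separated, i.e. η(n(0), n(0)) > 0. Then there is exactly one Δ > 0 with η(n(Δ), n(Δ)) = 0, and it is given by Δ = (t+σ)(cosh ρ − 1) − τ + sinh ρ · √((t+σ)² + ν²). In particular the return time is positive and uniquely determined. -/

import Mathlib

open Matrix Real

noncomputable section

/-- The Minkowski inner product on ℝ³, of signature (−,+,+). -/
def eta (x y : Fin 3 → ℝ) : ℝ := -(x 0 * y 0) + x 1 * y 1 + x 2 * y 2

/-- The Minkowski metric as a 3×3 matrix, η = diag(−1,1,1). -/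
def etaMat : Matrix (Fin 3) (Fin 3) ℝ := Matrix.diagonal ![(-1 : ℝ), 1, 1]

/-- Membership in the proper orthochronous Lorentz group SO⁺(2,1):
vᵀηv = η, det v = 1, v₀₀ > 0. -/
def IsPOLorentz (v : Matrix (Fin 3) (Fin 3) ℝ) : Prop :=
  vᵀ * etaMat * v = etaMat ∧ v.det = 1 ∧ 0 < v 0 0

/-- The Minkowski cross product x∧y, the unique vector with
η(x∧y, z) = det(x,y,z) for all z. -/
def mcross (x y : Fin 3 → ℝ) : Fin 3 → ℝ :=
  ![-(x 1 * y 2 - x 2 * y 1), x 2 * y 0 - x 0 * y 2, x 0 * y 1 - x 1 * y 0]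

/-! The holonomy frame `w - x`, `w`, `x ∧ w` (with `w = v x`) turns `η(n(Δ), n(Δ))` into the
concave quadratic `sinh² ρ ((t+σ)² + ν²) - (Δ + τ - (t+σ)(cosh ρ - 1))²`. Spacelike separation
at `Δ = 0` says that `0` lies strictly between its two roots, so exactly one root is positive. -/

section Minkowski

variable (p q r : Fin 3 → ℝ) (c : ℝ)

theorem eta_comm : eta p q = eta q p := by
  unfold eta; ring

theorem eta_add_left : eta (p + q) r = eta p r + eta q r := by
  simp only [eta, Pi.add_apply]; ring

theorem eta_add_right : eta p (q + r) = eta p q + eta p r := by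
  simp only [eta, Pi.add_apply]; ring

theorem eta_sub_left : eta (p - q) r = eta p r - eta q r := by
  simp only [eta, Pi.sub_apply]; ring

theorem eta_sub_right : eta p (q - r) = eta p q - eta p r := by
  simp only [eta, Pi.sub_apply]; ring

theorem eta_smul_left : eta (c • p) q = c * eta p q := by
  simp only [eta, Pi.smul_apply, smul_eq_mul]; ring

theorem eta_smul_right : eta p (c • q) = c * eta p q := by
  simp only [eta, Pi.smul_apply, smul_eq_mul]; ring

theorem eta_eq_dotProduct_mulVec : eta p q = p ⬝ᵥ etaMat *ᵥ q := by
  simp [eta, etaMat, mulVec, dotProduct, Fin.sum_univ_three, diagonal]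

theorem eta_mulVec_mulVec {v : Matrix (Fin 3) (Fin 3) ℝ} (hv : vᵀ * etaMat * v = etaMat) :
    eta (v *ᵥ p) (v *ᵥ q) = eta p q := by
  rw [eta_eq_dotProduct_mulVec, eta_eq_dotProduct_mulVec, mulVec_mulVec, dotProduct_mulVec,
    ← vecMul_transpose, vecMul_vecMul, ← Matrix.mul_assoc, hv, ← dotProduct_mulVec]

theorem eta_mcross : eta (mcross p q) r = (Matrix.of ![p, q, r]).det := by
  rw [Matrix.det_fin_three]
  simp only [eta, mcross, of_apply, cons_val', cons_val_zero, cons_val_one, cons_val,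
    cons_val_fin_one]
  ring

theorem eta_self_mcross : eta p (mcross p q) = 0 := by
  rw [eta_comm, eta_mcross]
  exact Matrix.det_zero_of_row_eq (i := 0) (j := 2) (by decide) rfl

theorem eta_mcross_self : eta q (mcross p q) = 0 := by
  rw [eta_comm, eta_mcross]
  exact Matrix.det_zero_of_row_eq (i := 1) (j := 2) (by decide) rfl

theorem eta_mcross_mcross :
    eta (mcross p q) (mcross p q) = eta p q ^ 2 - eta p p * eta q q := by
  simp only [eta, mcross, cons_val_zero, cons_val_one, cons_val]
  ring

end Minkowski

theorem eta_self_frame_combination {x w : Fin 3 → ℝ} {C : ℝ} (hx : eta x x = -1)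
    (hw : eta w w = -1) (hxw : eta x w = -C) (B D c : ℝ) :
    eta (B • (w - x) + D • w + c • mcross x w) (B • (w - x) + D • w + c • mcross x w)
      = (C ^ 2 - 1) * (B ^ 2 + c ^ 2) - (D - B * (C - 1)) ^ 2 := by
  simp only [eta_add_left, eta_add_right, eta_sub_left, eta_sub_right, eta_smul_left,
    eta_smul_right, eta_self_mcross, eta_mcross_self, eta_comm w x, eta_comm (mcross x w),
    eta_mcross_mcross, hx, hw, hxw]
  ring

theorem pos_root_of_sq_lt_sq {c K : ℝ} (hK : 0 ≤ K) (h0 : c ^ 2 < K ^ 2) :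
    0 < c + K ∧ ∀ Δ, 0 < Δ → (Δ - c) ^ 2 = K ^ 2 → Δ = c + K := by
  obtain ⟨hlow, hhigh⟩ := abs_lt_of_sq_lt_sq' h0 hK
  refine ⟨by linarith, fun Δ hΔ hroot => ?_⟩
  rcases sq_eq_sq_iff_eq_or_eq_neg.mp hroot with h | h <;> linarith

theorem return_time_unique_general
    (x x₀ a : Fin 3 → ℝ) (v : Matrix (Fin 3) (Fin 3) ℝ)
    (hx : eta x x = -1)
    (hv : IsPOLorentz v)
    (ρ σ τ ν t : ℝ) (hρ : 0 < ρ)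
    (hcosh : Real.cosh ρ = -eta x (v.mulVec x))
    (hdec : v.mulVec x₀ + a - x₀
      = σ • (v.mulVec x - x) + τ • v.mulVec x + ν • mcross x (v.mulVec x))
    (n : ℝ → Fin 3 → ℝ)
    (hn : ∀ Δ, n Δ = (t + Δ) • v.mulVec x - t • x + (v.mulVec x₀ + a - x₀))
    (hspace : 0 < eta (n 0) (n 0))
    (Δt : ℝ)
    (hΔt : Δt = (t + σ) * (Real.cosh ρ - 1) - τ
      + Real.sinh ρ * Real.sqrt ((t + σ) ^ 2 + ν ^ 2)) :
    (0 < Δt ∧ eta (n Δt) (n Δt) = 0) ∧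
      ∀ Δ : ℝ, 0 < Δ → eta (n Δ) (n Δ) = 0 → Δ = Δt := by
  set w := v *ᵥ x
  set c := (t + σ) * (cosh ρ - 1) - τ
  set K := sinh ρ * √((t + σ) ^ 2 + ν ^ 2)
  have hw : eta w w = -1 := (eta_mulVec_mulVec x x hv.1).trans hx
  have hframe : ∀ Δ, n Δ = (t + σ) • (w - x) + (Δ + τ) • w + ν • mcross x w := by
    intro Δ; rw [hn, hdec]; module
  have hquad : ∀ Δ, eta (n Δ) (n Δ) = K ^ 2 - (Δ - c) ^ 2 := by
    intro Δ
    rw [hframe, eta_self_frame_combination hx hw (neg_eq_iff_eq_neg.mpr hcosh).symm, ← sinh_sq,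
      mul_pow, sq_sqrt (by positivity)]
    ring
  have hK : 0 ≤ K := mul_nonneg (sinh_pos_iff.mpr hρ).le (sqrt_nonneg _)
  obtain ⟨hpos, huniq⟩ := pos_root_of_sq_lt_sq (c := c) hK (by linarith [hquad 0])
  subst hΔt
  refine ⟨⟨hpos, by rw [hquad]; ring⟩, fun Δ hΔ hzero => huniq Δ hΔ ?_⟩
  linarith [hquad Δ]

/-- if the emission event and its holonomy image are spacelike
separated, there is exactly one Δ > 0 with η(n(Δ),n(Δ)) = 0, given by the
return time formula. -/
theorem return_time_unique
    (x x₀ a : Fin 3 → ℝ) (v : Matrix (Fin 3) (Fin 3) ℝ)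
    (hx : eta x x = -1) (hxfut : 0 < x 0)
    (hv : IsPOLorentz v) (hvx : v.mulVec x ≠ x)
    (ρ σ τ ν t : ℝ) (hρ : 0 < ρ)
    (hcosh : Real.cosh ρ = -eta x (v.mulVec x))
    (hdec : v.mulVec x₀ + a - x₀
      = σ • (v.mulVec x - x) + τ • v.mulVec x + ν • mcross x (v.mulVec x))
    (n : ℝ → Fin 3 → ℝ)
    (hn : ∀ Δ, n Δ = (t + Δ) • v.mulVec x - t • x + (v.mulVec x₀ + a - x₀))
    (hspace : 0 < eta (n 0) (n 0))
    (Δt : ℝ)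
    (hΔt : Δt = (t + σ) * (Real.cosh ρ - 1) - τ
      + Real.sinh ρ * Real.sqrt ((t + σ) ^ 2 + ν ^ 2)) :
    (0 < Δt ∧ eta (n Δt) (n Δt) = 0) ∧
      ∀ Δ : ℝ, 0 < Δ → eta (n Δ) (n Δ) = 0 → Δ = Δt :=
  return_time_unique_general x x₀ a v hx hv ρ σ τ ν t hρ hcosh hdec n hn hspace Δt hΔt
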